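/- arXiv:1707.01242 — 3 statements merged into one kernel-verified Lean document; each statement's English description precedes it below -/
import Mathlib

section
/- Let v ∈ ℝⁿ be a unit vector and θ ∈ ℝ. The degree-1 Chow parameters of the linear threshold function f(x) = sign(v·x + θ) with respect to the standard Gaussian N(0,I) are 2·G(θ)·v, where G is the standard one-dimensional Gaussian density; that is, E_{X∼N(0,I)}[f(X)·X] = 2·G(θ)·v. -/
/-!
Write `x = (t, y)` with `t = x i`, so that `v ⬝ x + θ = v i * t + (w ⬝ y + θ)` where `w` lists the
other entries of `v`. For fixed `y`, the `t`-integral splits at the zero of the argument of `sgn`,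
and since `t G(t) = (-G)'(t)` it equals `E[sgn(c t + b) t] = 2 c G_{c²}(b)`, where `G_σ` is the
centred Gaussian density of variance `σ`. Averaging `G_σ(w ⬝ y + θ)` over `y` convolves Gaussian
densities one coordinate at a time, adding the variances, so the result is
`2 v i G_{‖v‖²}(θ) = 2 v i G(θ)`.
-/

open MeasureTheory ProbabilityTheory

noncomputable def sgn (t : ℝ) : ℝ := if 0 ≤ t then 1 else -1

noncomputable def gpdf (t : ℝ) : ℝ := (Real.sqrt (2 * Real.pi))⁻¹ * Real.exp (-t ^ 2 / 2)

noncomputable def stdGaussian (n : ℕ) : Measure (Fin n → ℝ) :=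
  Measure.pi fun _ => gaussianReal 0 1

open Real Set Filter Topology
open scoped NNReal

@[fun_prop]
lemma measurable_sgn : Measurable sgn :=
  Measurable.ite (measurableSet_le measurable_const measurable_id) measurable_const
    measurable_const

lemma abs_sgn_le_one (t : ℝ) : |sgn t| ≤ 1 := by
  unfold sgn; split <;> simp

lemma MeasureTheory.Integrable.sgn_comp_mul {α : Type*} [MeasurableSpace α] {μ : Measure α}
    {f g : α → ℝ} (hf : Measurable f) (hg : Integrable g μ) :
    Integrable (fun x ↦ sgn (f x) * g x) μ :=
  hg.bdd_mul (measurable_sgn.comp hf).aestronglyMeasurable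
    (ae_of_all _ fun x ↦ abs_sgn_le_one (f x))

lemma gaussianPDFReal_zero_one : gaussianPDFReal 0 1 = gpdf := by
  ext t; simp [gaussianPDFReal, gpdf]

lemma integral_gaussianReal_zero_one_eq_integral_gpdf_mul (f : ℝ → ℝ) :
    ∫ t, f t ∂gaussianReal 0 1 = ∫ t, gpdf t * f t := by
  simp [integral_gaussianReal_eq_integral_smul one_ne_zero, gaussianPDFReal_zero_one]

lemma hasDerivAt_gpdf (t : ℝ) : HasDerivAt gpdf (-(t * gpdf t)) t := by
  have h : HasDerivAt (fun t : ℝ ↦ -t ^ 2 / 2) (-t) t := by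
    refine (((hasDerivAt_pow 2 t).neg).div_const 2).congr_deriv ?_
    ring
  refine (h.exp.const_mul (√(2 * π))⁻¹).congr_deriv ?_
  simp only [gpdf]; ring

lemma tendsto_gpdf_atTop : Tendsto gpdf atTop (𝓝 0) := by
  have h : Tendsto (fun t : ℝ ↦ -t ^ 2 / 2) atTop atBot := by
    simp_rw [neg_div]
    exact tendsto_neg_atTop_atBot.comp
      ((tendsto_pow_atTop two_ne_zero).atTop_div_const (two_pos (α := ℝ)))
  have := (tendsto_exp_atBot.comp h).const_mul (√(2 * π))⁻¹
  rwa [mul_zero] at this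

lemma integrable_mul_gpdf : Integrable fun t : ℝ ↦ t * gpdf t := by
  refine ((integrable_mul_exp_neg_mul_sq (b := 2⁻¹) (by norm_num)).const_mul
    (√(2 * π))⁻¹).congr (ae_of_all _ fun t ↦ ?_)
  simp only [gpdf]; ring_nf

lemma integral_mul_gpdf : ∫ t, t * gpdf t = 0 := by
  have h := integral_id_gaussianReal (μ := 0) (v := 1)
  rwa [integral_gaussianReal_zero_one_eq_integral_gpdf_mul fun t ↦ t,
    funext fun t ↦ mul_comm (gpdf t) t] at h

lemma integral_Ioi_mul_gpdf (r : ℝ) : ∫ t in Ioi r, t * gpdf t = gpdf r := by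
  have := integral_Ioi_of_hasDerivAt_of_tendsto' (a := r) (f := fun t ↦ -gpdf t)
    (fun t _ ↦ by simpa using (hasDerivAt_gpdf t).fun_neg)
    integrable_mul_gpdf.integrableOn tendsto_gpdf_atTop.neg
  simpa using this

lemma integral_Iic_mul_gpdf (r : ℝ) : ∫ t in Iic r, t * gpdf t = -gpdf r := by
  have := intervalIntegral.integral_Iic_add_Ioi (b := r)
    integrable_mul_gpdf.integrableOn integrable_mul_gpdf.integrableOn
  rw [integral_mul_gpdf, integral_Ioi_mul_gpdf] at this
  linarith

lemma gpdf_neg (t : ℝ) : gpdf (-t) = gpdf t := by simp [gpdf]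

lemma integral_sgn_sub_mul_gaussianReal (r : ℝ) :
    ∫ t, sgn (t - r) * t ∂gaussianReal 0 1 = 2 * gpdf r := by
  have hint := integrable_mul_gpdf.sgn_comp_mul (f := fun t ↦ t - r) (by fun_prop)
  have hlow : ∀ t ∈ Iio r, sgn (t - r) * (t * gpdf t) = -(t * gpdf t) := fun t ht ↦ by
    simp [sgn, not_le.2 (sub_neg.2 (mem_Iio.1 ht))]
  have hupp : ∀ t ∈ Ici r, sgn (t - r) * (t * gpdf t) = t * gpdf t := fun t ht ↦ by
    simp [sgn, sub_nonneg.2 (mem_Ici.1 ht)]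
  simp_rw [integral_gaussianReal_zero_one_eq_integral_gpdf_mul, mul_left_comm (gpdf _),
    mul_comm (gpdf _)]
  rw [← intervalIntegral.integral_Iio_add_Ici hint.integrableOn hint.integrableOn,
    setIntegral_congr_fun measurableSet_Iio hlow, setIntegral_congr_fun measurableSet_Ici hupp,
    integral_neg, ← integral_Iic_eq_integral_Iio, integral_Ici_eq_integral_Ioi,
    integral_Iic_mul_gpdf, integral_Ioi_mul_gpdf]
  ring

lemma integral_sgn_mul_gaussianReal_of_pos {c : ℝ} (hc : 0 < c) (b : ℝ) :
    ∫ t, sgn (c * t + b) * t ∂gaussianReal 0 1 = 2 * c * gaussianPDFReal 0 (‖c‖₊ ^ 2) b := by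
  have hsgn : ∀ t, sgn (c * t + b) = sgn (t - (-(c⁻¹ * b))) := fun t ↦ by
    have h : c * (t - -(c⁻¹ * b)) = c * t + b := by field_simp; ring
    simp only [sgn, ← h, mul_nonneg_iff_of_pos_left hc]
  have hpdf := gaussianPDFReal_inv_mul (μ := 0) (v := 1) hc.ne' b
  simp_rw [hsgn]
  rw [integral_sgn_sub_mul_gaussianReal, gpdf_neg, ← gaussianPDFReal_zero_one, hpdf, mul_zero,
    abs_of_pos hc, ← mul_assoc]
  congr 2
  ext; simp

lemma integral_sgn_mul_gaussianReal (c b : ℝ) :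
    ∫ t, sgn (c * t + b) * t ∂gaussianReal 0 1 = 2 * c * gaussianPDFReal 0 (‖c‖₊ ^ 2) b := by
  rcases lt_trichotomy c 0 with hc | rfl | hc
  · have hreflect : ∫ t, sgn (c * t + b) * t ∂gaussianReal 0 1
        = -∫ t, sgn (-c * t + b) * t ∂gaussianReal 0 1 := by
      conv_lhs => rw [← neg_zero, ← gaussianReal_map_neg,
        integral_map measurable_neg.aemeasurable (by fun_prop)]
      simp [← integral_neg]
    rw [hreflect, integral_sgn_mul_gaussianReal_of_pos (neg_pos.2 hc), nnnorm_neg]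
    ring
  · simp only [zero_mul, zero_add]
    rw [integral_const_mul, integral_id_gaussianReal]
    simp
  · exact integral_sgn_mul_gaussianReal_of_pos hc b

lemma integral_gaussianPDFReal_mul_add_gaussianReal {s : ℝ≥0} (hs : s ≠ 0) (w b : ℝ) :
    ∫ t, gaussianPDFReal 0 s (w * t + b) ∂gaussianReal 0 1
      = gaussianPDFReal 0 (s + ‖w‖₊ ^ 2) b := by
  set S : ℝ := s + w ^ 2
  have hS : 0 < S := by positivity
  -- completing the square in `t`
  set β : ℝ := S / (2 * s)
  have hβ : 0 < β := by positivity
  set m : ℝ := w * b / S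
  have hexp : ∀ t : ℝ,
      -t ^ 2 / 2 + -(w * t + b) ^ 2 / (2 * s) = -b ^ 2 / (2 * S) + -β * (t + m) ^ 2 := by
    intro t
    simp only [β, m]
    field_simp
    ring
  have hconst : (√(2 * π))⁻¹ * (√(2 * π * s))⁻¹ = (√(2 * π * S))⁻¹ * (√(π / β))⁻¹ := by
    rw [← mul_inv, ← mul_inv, ← sqrt_mul (by positivity), ← sqrt_mul (by positivity)]
    congr 2
    simp only [β]
    field_simp
  have hpt : ∀ t, gpdf t * gaussianPDFReal 0 s (w * t + b)
      = gaussianPDFReal 0 (s + ‖w‖₊ ^ 2) b * ((√(π / β))⁻¹ * exp (-β * (t + m) ^ 2)) := by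
    intro t
    have hS' : ((s + ‖w‖₊ ^ 2 : ℝ≥0) : ℝ) = S := by simp [S]
    simp only [gpdf, gaussianPDFReal, hS', sub_zero]
    calc _ = (√(2 * π))⁻¹ * (√(2 * π * s))⁻¹
          * exp (-t ^ 2 / 2 + -(w * t + b) ^ 2 / (2 * s)) := by rw [exp_add]; ring
      _ = _ := by rw [hconst, hexp, exp_add]; ring
  have hgauss : ∫ t, exp (-β * (t + m) ^ 2) = √(π / β) := by
    rw [integral_add_right_eq_self (fun u ↦ exp (-β * u ^ 2)), integral_gaussian]
  simp_rw [integral_gaussianReal_zero_one_eq_integral_gpdf_mul, hpt]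
  rw [integral_const_mul, integral_const_mul, hgauss, inv_mul_cancel₀ (by positivity), mul_one]

lemma gaussianPDFReal_le (μ : ℝ) (v : ℝ≥0) (x : ℝ) :
    gaussianPDFReal μ v x ≤ (√(2 * π * v))⁻¹ := by
  refine mul_le_of_le_one_right (by positivity) (exp_le_one_iff.2 ?_)
  exact div_nonpos_of_nonpos_of_nonneg (neg_nonpos.2 (sq_nonneg _)) (by positivity)

lemma integral_pi_eq_integral_insertNth {α E : Type*} [MeasurableSpace α] [NormedAddCommGroup E]
    [NormedSpace ℝ E] (μ : Measure α) [SigmaFinite μ] {m : ℕ} (i : Fin (m + 1))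
    (f : (Fin (m + 1) → α) → E) :
    ∫ x, f x ∂Measure.pi (fun _ ↦ μ)
      = ∫ p, f (i.insertNth p.1 p.2) ∂μ.prod (Measure.pi fun _ ↦ μ) :=
  (((measurePreserving_piFinSuccAbove (fun _ ↦ μ) i).symm _).integral_comp' f).symm

lemma sum_mul_insertNth {m : ℕ} (v : Fin (m + 1) → ℝ) (i : Fin (m + 1)) (t : ℝ)
    (y : Fin m → ℝ) :
    ∑ j, v j * (i.insertNth t y : Fin (m + 1) → ℝ) j
      = v i * t + ∑ j, v (i.succAbove j) * y j := by
  simp [Fin.sum_univ_succAbove _ i]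

lemma integral_gaussianPDFReal_sum_mul_add_pi {s : ℝ≥0} (hs : s ≠ 0) {m : ℕ} (w : Fin m → ℝ)
    (b : ℝ) :
    ∫ y, gaussianPDFReal 0 s ((∑ j, w j * y j) + b) ∂Measure.pi (fun _ ↦ gaussianReal 0 1)
      = gaussianPDFReal 0 (s + ∑ j, ‖w j‖₊ ^ 2) b := by
  induction m generalizing b with
  | zero => simp
  | succ m ih =>
    have hint : Integrable (fun p : ℝ × (Fin m → ℝ) ↦
        gaussianPDFReal 0 s ((∑ j, w j * (Fin.insertNth 0 p.1 p.2 : Fin (m + 1) → ℝ) j) + b))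
        ((gaussianReal 0 1).prod (Measure.pi fun _ ↦ gaussianReal 0 1)) :=
      .of_bound ((measurable_gaussianPDFReal 0 s).comp (by fun_prop)).aestronglyMeasurable _
        (ae_of_all _ fun p ↦ by
          rw [Real.norm_of_nonneg (gaussianPDFReal_nonneg _ _ _)]
          exact gaussianPDFReal_le _ _ _)
    have hinner : ∀ t, ∫ y,
        gaussianPDFReal 0 s ((∑ j, w j * (Fin.insertNth 0 t y : Fin (m + 1) → ℝ) j) + b)
          ∂Measure.pi (fun _ ↦ gaussianReal 0 1)
        = gaussianPDFReal 0 (s + ∑ j, ‖w (Fin.succ j)‖₊ ^ 2) (w 0 * t + b) := fun t ↦ by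
      rw [← ih]
      congr 1 with y
      rw [sum_mul_insertNth, Fin.succAbove_zero, add_comm (w 0 * t), add_assoc]
    rw [integral_pi_eq_integral_insertNth _ 0, integral_prod _ hint]
    simp_rw [hinner]
    rw [integral_gaussianPDFReal_mul_add_gaussianReal (by simp [hs]), Fin.sum_univ_succ,
      add_comm (‖w 0‖₊ ^ 2), add_assoc]

/-- The degree-1 Chow parameters of the LTF `x ↦ sign(v·x + θ)` with respect to the
standard Gaussian are `2 G(θ) v`. -/
theorem chow_parameters_of_LTF (n : ℕ) (v : Fin n → ℝ) (θ : ℝ)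
    (hv : ∑ i, v i ^ 2 = 1) (i : Fin n) :
    ∫ x, sgn ((∑ j, v j * x j) + θ) * x i ∂(stdGaussian n) = 2 * gpdf θ * v i := by
  obtain ⟨m, rfl⟩ : ∃ m, n = m + 1 := ⟨n - 1, (Nat.succ_pred_eq_of_pos i.pos).symm⟩
  set w : Fin m → ℝ := fun j ↦ v (i.succAbove j)
  have hvar : ‖v i‖₊ ^ 2 + ∑ j, ‖w j‖₊ ^ 2 = 1 := by
    ext
    simpa [w, Fin.sum_univ_succAbove _ i] using hv
  have hint : Integrable
      (fun p : ℝ × (Fin m → ℝ) ↦ sgn (v i * p.1 + ((∑ j, w j * p.2 j) + θ)) * p.1)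
      ((gaussianReal 0 1).prod (Measure.pi fun _ ↦ gaussianReal 0 1)) :=
    (((memLp_id_gaussianReal 1).integrable le_rfl).comp_fst _).sgn_comp_mul (by fun_prop)
  rw [_root_.stdGaussian, integral_pi_eq_integral_insertNth _ i]
  simp_rw [sum_mul_insertNth, Fin.insertNth_apply_same, add_assoc]
  rw [integral_prod_symm _ hint]
  simp_rw [integral_sgn_mul_gaussianReal]
  rw [integral_const_mul]
  rcases eq_or_ne (v i) 0 with hvi | hvi
  · simp [hvi]
  rw [integral_gaussianPDFReal_sum_mul_add_pi (by simpa using hvi), hvar, gaussianPDFReal_zero_one]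
  ring
end

section
/- For a unit vector v ∈ ℝⁿ and reals θ, σ with 0 < σ < 1, consider the rejection procedure that accepts a point x ∈ ℝⁿ with probability exp(−(σ⁻²−1)(v·x + θ/(1−σ²))²/2). If inputs are drawn from the standard Gaussian N(0,I), then the probability a point is accepted equals σ·exp(−θ²/(2(1−σ²))), and the conditional distribution given acceptance is N(−θv, A), where A = I − (1−σ²)vvᵀ. -/
open MeasureTheory ProbabilityTheory

/-!
The map `T x = x - ((1 - σ) ⟪v, x⟫ + θ) v` is affine, with linear part `I - (1 - σ) v vᵀ` of
determinant `σ`. Completing the square shows that the standard Gaussian density `φ` and the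
acceptance weight `w` satisfy `φ (T x) * w (T x) = exp (-θ² / (2 (1 - σ²))) * φ x`. Substituting
`y = T x` in `∫_s φ w` therefore gives `σ exp (-θ² / (2 (1 - σ²))) γ (T⁻¹ s)` for the standard
Gaussian `γ`, and `s = univ` gives the acceptance probability.
-/

open Real Matrix
open scoped ENNReal NNReal

section Gaussian

variable {ι : Type*} [Fintype ι]

theorem pi_gaussianReal_eq_withDensity (m : ι → ℝ) {v : ι → ℝ≥0} (hv : ∀ i, v i ≠ 0) :
    Measure.pi (fun i => gaussianReal (m i) (v i)) =
      volume.withDensity fun x => ENNReal.ofReal (∏ i, gaussianPDFReal (m i) (v i) (x i)) := by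
  refine Measure.pi_eq fun s hs => ?_
  have hint : Integrable (fun x : ι → ℝ => ∏ i, gaussianPDFReal (m i) (v i) (x i)) :=
    Integrable.fintype_prod fun i => integrable_gaussianPDFReal (m i) (v i)
  rw [withDensity_apply _ (.univ_pi hs), ← ofReal_integral_eq_lintegral_ofReal hint.restrict
      (ae_of_all _ fun x => Finset.prod_nonneg fun i _ => gaussianPDFReal_nonneg _ _ _),
    volume_pi, Measure.restrict_pi_pi, integral_fintype_prod_eq_prod,
    ENNReal.ofReal_prod_of_nonneg fun i _ =>
      setIntegral_nonneg (hs i) fun _ _ => gaussianPDFReal_nonneg _ _ _]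
  exact Finset.prod_congr rfl fun i _ => (gaussianReal_apply_eq_integral _ (hv i) _).symm

theorem integral_withDensity_ofReal {φ : (ι → ℝ) → ℝ} (hφm : Measurable φ) (hφ : 0 ≤ φ)
    (g : (ι → ℝ) → ℝ) :
    ∫ x, g x ∂(volume.withDensity fun x => ENNReal.ofReal (φ x)) = ∫ x, φ x * g x := by
  rw [integral_withDensity_eq_integral_toReal_smul hφm.ennreal_ofReal
    (ae_of_all _ fun _ => ENNReal.ofReal_lt_top)]
  simp_rw [ENNReal.toReal_ofReal (hφ _), smul_eq_mul]

theorem prod_gaussianPDFReal_zero_one (x : ι → ℝ) :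
    ∏ i, gaussianPDFReal 0 1 (x i) =
      (√(2 * π))⁻¹ ^ Fintype.card ι * exp (-(∑ i, x i ^ 2) / 2) := by
  simp only [gaussianPDFReal, NNReal.coe_one, mul_one, sub_zero, Finset.prod_mul_distrib,
    Finset.prod_const, Finset.card_univ, ← Real.exp_sum, Finset.sum_div, Finset.sum_neg_distrib,
    neg_div]

end Gaussian

instance isProbabilityMeasure_stdGaussian (n : ℕ) :
    IsProbabilityMeasure (_root_.stdGaussian n) :=
  inferInstanceAs (IsProbabilityMeasure (Measure.pi _))

section ChangeOfVariables

variable {ι : Type*} [Fintype ι] {E : Type*} [NormedAddCommGroup E] [NormedSpace ℝ E]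

theorem integral_comp_linearMap_add {f : (ι → ℝ) →ₗ[ℝ] ι → ℝ} (hf : LinearMap.det f ≠ 0)
    (b : ι → ℝ) (g : (ι → ℝ) → E) :
    ∫ x, g (f x + b) = |LinearMap.det f|⁻¹ • ∫ y, g y := by
  let F := (LinearMap.equivOfDetNeZero f hf).toContinuousLinearEquiv
  have hF : MeasurableEmbedding f := F.toHomeomorph.measurableEmbedding
  rw [← hF.integral_map (g := fun y => g (y + b)),
    Real.map_linearMap_volume_pi_eq_smul_volume_pi hf, integral_smul_measure,
    ENNReal.toReal_ofReal (abs_nonneg _), abs_inv, integral_add_right_eq_self]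

end ChangeOfVariables

section Reweighting

variable {ι : Type*} [Fintype ι]

theorem setIntegral_withDensity_eq_mul_map_measureReal {φ : (ι → ℝ) → ℝ} (hφm : Measurable φ)
    (hφ : 0 ≤ φ) {w : (ι → ℝ) → ℝ} {f : (ι → ℝ) →ₗ[ℝ] ι → ℝ} (hf : LinearMap.det f ≠ 0)
    (b : ι → ℝ) {e : ℝ} (hw : ∀ x, φ (f x + b) * w (f x + b) = e * φ x) {s : Set (ι → ℝ)}
    (hs : MeasurableSet s) :
    ∫ x in s, w x ∂(volume.withDensity fun x => ENNReal.ofReal (φ x)) =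
      |LinearMap.det f| * e *
        ((volume.withDensity fun x => ENNReal.ofReal (φ x)).map (fun x => f x + b)).real s := by
  set T := fun x => f x + b
  have hT : Measurable T := (LinearMap.continuous_of_finiteDimensional f).measurable.add_const b
  have hpoint : ∀ x, φ (T x) * s.indicator w (T x) = e * (φ x * (T ⁻¹' s).indicator 1 x) := by
    intro x
    by_cases hx : T x ∈ s
    · simpa [Set.indicator_of_mem hx, Set.indicator_of_mem (Set.mem_preimage.2 hx)] using hw x
    · simp [Set.indicator_of_notMem hx, Set.indicator_of_notMem (show x ∉ T ⁻¹' s from hx)]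
  calc ∫ x in s, w x ∂(volume.withDensity fun x => ENNReal.ofReal (φ x))
      = ∫ x, φ x * s.indicator w x := by
        rw [← integral_indicator hs, integral_withDensity_ofReal hφm hφ]
    _ = |LinearMap.det f| * ∫ x, φ (T x) * s.indicator w (T x) := by
        rw [integral_comp_linearMap_add hf b (fun y => φ y * s.indicator w y), smul_eq_mul,
          ← mul_assoc, mul_inv_cancel₀ (abs_ne_zero.2 hf), one_mul]
    _ = _ := by
        rw [funext hpoint, integral_const_mul, ← integral_withDensity_ofReal hφm hφ,
          integral_indicator_one (hT hs), map_measureReal_apply hT hs, mul_assoc]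

theorem setIntegral_pi_gaussianReal_eq_mul_map_measureReal {w : (ι → ℝ) → ℝ}
    {f : (ι → ℝ) →ₗ[ℝ] ι → ℝ} (hf : LinearMap.det f ≠ 0) (b : ι → ℝ) {e : ℝ}
    (hw : ∀ x, exp (-(∑ i, (f x + b) i ^ 2) / 2) * w (f x + b) = e * exp (-(∑ i, x i ^ 2) / 2))
    {s : Set (ι → ℝ)} (hs : MeasurableSet s) :
    ∫ x in s, w x ∂(Measure.pi fun _ : ι => gaussianReal 0 1) =
      |LinearMap.det f| * e *
        ((Measure.pi fun _ : ι => gaussianReal 0 1).map (fun x => f x + b)).real s := by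
  rw [pi_gaussianReal_eq_withDensity _ fun _ => one_ne_zero]
  refine setIntegral_withDensity_eq_mul_map_measureReal ?_ ?_ hf b (fun x => ?_) hs
  · exact Finset.measurable_prod _ fun i _ =>
      (measurable_gaussianPDFReal 0 1).comp (measurable_pi_apply i)
  · exact fun x => Finset.prod_nonneg fun i _ => gaussianPDFReal_nonneg 0 1 (x i)
  · rw [prod_gaussianPDFReal_zero_one, prod_gaussianPDFReal_zero_one, mul_assoc, hw]
    ring

end Reweighting

section RankOne

variable {ι R : Type*} [Fintype ι] [DecidableEq ι] [CommRing R]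

theorem det_toLin'_one_add_replicateCol_mul_replicateRow (u w : ι → R) :
    LinearMap.det (toLin' (1 + replicateCol Unit u * replicateRow Unit w)) = 1 + w ⬝ᵥ u := by
  rw [LinearMap.det_toLin', det_one_add_replicateCol_mul_replicateRow]

theorem toLin'_one_add_replicateCol_mul_replicateRow_apply (u w x : ι → R) :
    toLin' (1 + replicateCol Unit u * replicateRow Unit w) x = x + (w ⬝ᵥ x) • u := by
  rw [toLin'_apply, add_mulVec, one_mulVec, ← mulVec_mulVec, replicateRow_mulVec_eq_const]
  ext i
  simp [mulVec, dotProduct, mul_comm]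

end RankOne

section Quadratic

variable {ι : Type*} [Fintype ι] {v : ι → ℝ}

theorem dotProduct_sub_smul_self (hv : v ⬝ᵥ v = 1) (c : ℝ) (x : ι → ℝ) :
    v ⬝ᵥ (x - c • v) = v ⬝ᵥ x - c := by
  rw [dotProduct_sub, dotProduct_smul, hv, smul_eq_mul, mul_one]

theorem sum_sq_sub_smul (hv : v ⬝ᵥ v = 1) (c : ℝ) (x : ι → ℝ) :
    ∑ i, (x - c • v) i ^ 2 = ∑ i, x i ^ 2 - 2 * c * (v ⬝ᵥ x) + c ^ 2 := by
  have hv' : ∑ i, v i ^ 2 = 1 := by simpa [dotProduct, sq] using hv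
  have hterm : ∀ i, (x - c • v) i ^ 2 = x i ^ 2 - 2 * c * (v i * x i) + c ^ 2 * v i ^ 2 :=
    fun i => by simp only [Pi.sub_apply, Pi.smul_apply, smul_eq_mul]; ring
  simp only [hterm, Finset.sum_add_distrib, Finset.sum_sub_distrib, ← Finset.mul_sum, hv',
    dotProduct, mul_one]

theorem exp_neg_sum_sq_mul_acceptance (hv : v ⬝ᵥ v = 1) {σ : ℝ} (hσ : σ ≠ 0)
    (hσ1 : 1 - σ ^ 2 ≠ 0) (θ : ℝ) (x : ι → ℝ) :
    let y := x - ((1 - σ) * (v ⬝ᵥ x) + θ) • v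
    exp (-(∑ i, y i ^ 2) / 2) * exp (-(1 / σ ^ 2 - 1) * (v ⬝ᵥ y + θ / (1 - σ ^ 2)) ^ 2 / 2) =
      exp (-θ ^ 2 / (2 * (1 - σ ^ 2))) * exp (-(∑ i, x i ^ 2) / 2) := by
  intro y
  rw [sum_sq_sub_smul hv, dotProduct_sub_smul_self hv, ← exp_add, ← exp_add]
  congr 1
  field_simp
  ring

end Quadratic

/-- Rejection sampling: acceptance probability and conditional law `N(-θv, I-(1-σ²)vvᵀ)`,
the latter realized as the pushforward of the standard Gaussian under `x ↦ A^{1/2}x - θv`. -/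
theorem rejection_sampling (n : ℕ) (v : Fin n → ℝ) (θ σ : ℝ)
    (hv : ∑ i, v i ^ 2 = 1) (hσ0 : 0 < σ) (hσ1 : σ < 1) :
    (∫ x, Real.exp (-(1 / σ ^ 2 - 1) * ((∑ j, v j * x j) + θ / (1 - σ ^ 2)) ^ 2 / 2)
        ∂(stdGaussian n) = σ * Real.exp (-θ ^ 2 / (2 * (1 - σ ^ 2)))) ∧
    ∀ s : Set (Fin n → ℝ), MeasurableSet s →
      ∫ x in s, Real.exp (-(1 / σ ^ 2 - 1) * ((∑ j, v j * x j) + θ / (1 - σ ^ 2)) ^ 2 / 2)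
          ∂(stdGaussian n)
        = σ * Real.exp (-θ ^ 2 / (2 * (1 - σ ^ 2))) *
          (((stdGaussian n).map
              (fun x i => x i - (1 - σ) * (∑ j, v j * x j) * v i - θ * v i)) s).toReal := by
  set w := fun x : Fin n → ℝ =>
    Real.exp (-(1 / σ ^ 2 - 1) * ((∑ j, v j * x j) + θ / (1 - σ ^ 2)) ^ 2 / 2)
  set T := fun (x : Fin n → ℝ) i => x i - (1 - σ) * (∑ j, v j * x j) * v i - θ * v i
  have hvv : v ⬝ᵥ v = 1 := by simpa [dotProduct, sq] using hv
  set f := toLin' (1 + replicateCol Unit (-(1 - σ) • v) * replicateRow Unit v)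
  have hdet : LinearMap.det f = σ := by
    rw [det_toLin'_one_add_replicateCol_mul_replicateRow, dotProduct_smul, hvv]
    simp
  have hf : ∀ x, f x + -θ • v = x - ((1 - σ) * (v ⬝ᵥ x) + θ) • v := fun x => by
    rw [toLin'_one_add_replicateCol_mul_replicateRow_apply]
    module
  have hT : T = fun x => f x + -θ • v := by
    funext x i
    rw [hf]
    simp only [T, dotProduct, Pi.sub_apply, Pi.smul_apply, smul_eq_mul]
    ring
  have key : ∀ s, MeasurableSet s → ∫ x in s, w x ∂(stdGaussian n) =
      σ * exp (-θ ^ 2 / (2 * (1 - σ ^ 2))) * (((stdGaussian n).map T) s).toReal := by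
    intro s hs
    have := setIntegral_pi_gaussianReal_eq_mul_map_measureReal (w := w) (hdet ▸ hσ0.ne')
      (-θ • v) (fun x => by
        rw [hf]; exact exp_neg_sum_sq_mul_acceptance hvv hσ0.ne' (by nlinarith) θ x) hs
    rwa [hdet, abs_of_pos hσ0, ← hT] at this
  refine ⟨?_, key⟩
  rw [← setIntegral_univ, key _ .univ, Measure.map_apply (by fun_prop) .univ, Set.preimage_univ,
    measure_univ, ENNReal.toReal_one, mul_one]
end

section
/- For any R > 0, d a positive integer, ε > 0, and a > 0 defined by exp(−(a/R)^{2/d}) = ε, we have ∫_a^∞ exp(−(T/R)^{2/d})·T dT ≤ (d²/2)·ε·(d + ln(1/ε))^{d−1}·R². -/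
open MeasureTheory ProbabilityTheory

/-!
The substitution `u = (T / R) ^ (2 / d)` turns the integral into `(d / 2) R² Γ(d, b)` with
`b = (a / R) ^ (2 / d) = log (1 / ε)`, and for integer `d` the upper incomplete gamma function is
elementary: `Γ(d, b) = e^{-b} ∑_{k < d} (d-1)! / k! · b^k`, which is checked by differentiating it.
Since `(d-1)! / k! ≤ (d-1)^(d-1-k)`, the sum is termwise at most the binomial expansion of
`(d - 1 + b)^(d-1)`.
-/

open Real Finset Filter Topology
open scoped Nat

noncomputable def expTailPoly (n : ℕ) (u : ℝ) : ℝ :=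
  ∑ k ∈ range (n + 1), ((n ! : ℝ) / k !) * u ^ k

/-- The upper incomplete gamma function `Γ(n + 1, u) = ∫ t in Ioi u, t ^ n * exp (-t)`
(note the shift of `n`). -/
noncomputable def upperIncGamma (n : ℕ) (u : ℝ) : ℝ :=
  exp (-u) * expTailPoly n u

theorem hasDerivAt_expTailPoly (n : ℕ) (u : ℝ) :
    HasDerivAt (expTailPoly n) (expTailPoly n u - u ^ n) u := by
  have hsum : HasDerivAt (expTailPoly n)
      (∑ k ∈ range (n + 1), ((n ! : ℝ) / k !) * (k * u ^ (k - 1))) u :=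
    HasDerivAt.fun_sum fun k _ => (hasDerivAt_pow k u).const_mul _
  convert hsum using 1
  have hcoeff : ∀ j : ℕ, ((n ! : ℝ) / (j + 1)!) * (j + 1 : ℕ) = n ! / j ! := by
    intro j
    rw [Nat.factorial_succ]
    push_cast
    field_simp
  rw [expTailPoly, sum_range_succ, sum_range_succ']
  simp only [Nat.add_sub_cancel, ← mul_assoc, hcoeff, div_self (a := (n ! : ℝ)) (by positivity),
    one_mul, CharP.cast_eq_zero, mul_zero, zero_mul, add_zero, add_sub_cancel_right]

theorem hasDerivAt_upperIncGamma (n : ℕ) (u : ℝ) :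
    HasDerivAt (upperIncGamma n) (-(exp (-u) * u ^ n)) u := by
  have hexp : HasDerivAt (fun u : ℝ => exp (-u)) (-exp (-u)) u := by
    simpa using (hasDerivAt_neg' u).exp
  exact (hexp.fun_mul (hasDerivAt_expTailPoly n u)).congr_deriv (by ring)

@[fun_prop]
theorem continuous_upperIncGamma (n : ℕ) : Continuous (upperIncGamma n) :=
  continuous_iff_continuousAt.mpr fun u => (hasDerivAt_upperIncGamma n u).continuousAt

theorem tendsto_upperIncGamma_atTop (n : ℕ) :
    Tendsto (upperIncGamma n) atTop (𝓝 0) := by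
  have hterms : upperIncGamma n =
      fun u => ∑ k ∈ range (n + 1), ((n ! : ℝ) / k !) * (u ^ k * exp (-u)) := by
    ext u
    simp only [upperIncGamma, expTailPoly, mul_sum]
    exact sum_congr rfl fun k _ => by ring
  rw [hterms]
  simpa using tendsto_finsetSum (range (n + 1)) fun k _ =>
    (tendsto_pow_mul_exp_neg_atTop_nhds_zero k).const_mul ((n ! : ℝ) / k !)

theorem factorial_div_factorial_le_pow {n k : ℕ} (hk : k ≤ n) :
    (n ! : ℝ) / k ! ≤ (n : ℝ) ^ (n - k) := by
  rw [div_le_iff₀ (by positivity), ← Nat.factorial_mul_descFactorial (Nat.sub_le n k),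
    Nat.sub_sub_self hk, mul_comm]
  push_cast
  gcongr
  exact_mod_cast Nat.descFactorial_le_pow n (n - k)

theorem expTailPoly_le_add_pow (n : ℕ) {b : ℝ} (hb : 0 ≤ b) :
    expTailPoly n b ≤ (n + b) ^ n := by
  rw [add_comm, add_pow]
  refine sum_le_sum fun k hk => ?_
  have hkn : k ≤ n := Nat.lt_succ_iff.mp (mem_range.mp hk)
  have hchoose : (1 : ℝ) ≤ n.choose k := by exact_mod_cast Nat.choose_pos hkn
  calc ((n ! : ℝ) / k !) * b ^ k ≤ (n : ℝ) ^ (n - k) * b ^ k := by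
        gcongr
        exact factorial_div_factorial_le_pow hkn
    _ ≤ b ^ k * (n : ℝ) ^ (n - k) * n.choose k := by
        rw [mul_comm ((n : ℝ) ^ (n - k))]
        exact le_mul_of_one_le_right (by positivity) hchoose

theorem hasDerivAt_exp_neg_div_rpow_antideriv (m : ℕ) {R T : ℝ} (hR : 0 < R) (hT : 0 < T) :
    HasDerivAt
      (fun T => -((m + 1) / 2 * R ^ 2 *
        upperIncGamma m ((T / R) ^ (2 / (m + 1 : ℝ)))))
      (exp (-(T / R) ^ (2 / (m + 1 : ℝ))) * T) T := by
  set c : ℝ := 2 / (m + 1)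
  have hTR : 0 < T / R := div_pos hT hR
  have hu : HasDerivAt (fun T => (T / R) ^ c) (1 / R * c * (T / R) ^ (c - 1)) T :=
    ((hasDerivAt_id T).div_const R).rpow_const (Or.inl hTR.ne')
  have hc : (m + 1) / 2 * c = 1 := by simp only [c]; field_simp
  have hpow : ((T / R) ^ c) ^ m * (T / R) ^ (c - 1) = T / R := by
    rw [← rpow_mul_natCast hTR.le, ← rpow_add hTR]
    convert rpow_one (T / R) using 2
    linear_combination 2 * hc
  refine ((((hasDerivAt_upperIncGamma m _).comp T hu).const_mul _).neg).congr_deriv ?_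
  calc _ = (m + 1) / 2 * c * R ^ 2 * (1 / R) * exp (-(T / R) ^ c) *
        (((T / R) ^ c) ^ m * (T / R) ^ (c - 1)) := by ring
    _ = exp (-(T / R) ^ c) * T := by rw [hc, hpow]; field_simp

theorem integral_Ioi_exp_neg_div_rpow_mul_self (m : ℕ) {R a : ℝ} (hR : 0 < R) (ha : 0 ≤ a) :
    ∫ T in Set.Ioi a, exp (-(T / R) ^ (2 / (m + 1 : ℝ))) * T =
      (m + 1) / 2 * R ^ 2 *
        upperIncGamma m ((a / R) ^ (2 / (m + 1 : ℝ))) := by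
  set c : ℝ := 2 / (m + 1)
  have hc : 0 < c := by positivity
  have hcont : Continuous fun T => -((m + 1) / 2 * R ^ 2 *
      upperIncGamma m ((T / R) ^ c)) := by
    fun_prop (disch := exact hc.le)
  have hlim : Tendsto (fun T => -((m + 1) / 2 * R ^ 2 *
      upperIncGamma m ((T / R) ^ c))) atTop (𝓝 0) := by
    have hu_top : Tendsto (fun T : ℝ => (T / R) ^ c) atTop atTop :=
      (tendsto_rpow_atTop hc).comp (tendsto_id.atTop_div_const hR)
    simpa using (((tendsto_upperIncGamma_atTop m).comp hu_top).const_mul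
      ((m + 1) / 2 * R ^ 2)).neg
  rw [integral_Ioi_of_hasDerivAt_of_nonneg hcont.continuousWithinAt
    (fun T hT => hasDerivAt_exp_neg_div_rpow_antideriv m hR (ha.trans_lt hT))
    (fun T hT => mul_nonneg (exp_pos _).le (ha.trans hT.le)) hlim]
  ring

theorem damn_integral_general (R ε a : ℝ) (d : ℕ) (hR : 0 < R) (hd : 1 ≤ d)
    (ha : 0 ≤ a) (haε : Real.exp (-((a / R) ^ ((2 : ℝ) / d))) = ε) :
    (∫ T in Set.Ici a, Real.exp (-((T / R) ^ ((2 : ℝ) / d))) * T)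
      ≤ ((d : ℝ) ^ 2 / 2) * ε * ((d : ℝ) + Real.log (1 / ε)) ^ (d - 1) * R ^ 2 := by
  obtain ⟨m, rfl⟩ := Nat.exists_eq_add_of_le' hd
  push_cast at haε ⊢
  rw [MeasureTheory.integral_Ici_eq_integral_Ioi, integral_Ioi_exp_neg_div_rpow_mul_self m hR ha,
    upperIncGamma]
  set b := (a / R) ^ (2 / (m + 1 : ℝ))
  have hb : 0 ≤ b := by positivity
  have hlog : log (1 / ε) = b := by rw [← haε, one_div, ← exp_neg, log_exp, neg_neg]
  rw [haε, hlog]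
  have hε : 0 < ε := haε ▸ exp_pos _
  calc (m + 1) / 2 * R ^ 2 * (ε * expTailPoly m b)
      ≤ (m + 1) / 2 * R ^ 2 * (ε * (m + 1 + b) ^ m) := by
        gcongr
        exact (expTailPoly_le_add_pow m hb).trans (by gcongr; linarith)
    _ ≤ (m + 1) ^ 2 / 2 * ε * (m + 1 + b) ^ m * R ^ 2 := by
        have hm : (m + 1 : ℝ) ≤ (m + 1) ^ 2 := by nlinarith
        have : 0 ≤ ε * (m + 1 + b) ^ m * R ^ 2 := by positivity
        nlinarith

/-- Tail integral bound: if exp(-(a/R)^{2/d}) = ε then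
∫_a^∞ exp(-(T/R)^{2/d}) T dT ≤ (d²/2) ε (d + ln(1/ε))^{d-1} R². -/
theorem damn_integral (R ε a : ℝ) (d : ℕ) (hR : 0 < R) (hd : 1 ≤ d) (hε : 0 < ε)
    (ha : 0 ≤ a) (haε : Real.exp (-((a / R) ^ ((2 : ℝ) / d))) = ε) :
    (∫ T in Set.Ici a, Real.exp (-((T / R) ^ ((2 : ℝ) / d))) * T)
      ≤ ((d : ℝ) ^ 2 / 2) * ε * ((d : ℝ) + Real.log (1 / ε)) ^ (d - 1) * R ^ 2 :=
  damn_integral_general R ε a d hR hd ha haε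
end
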